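/- Let z_n := (6n−1)!!/(6^{2n}(2n)!), the n-th coefficient of the partition function of zero-dimensional φ³-theory. Then for every R ∈ ℕ, z_n − (1/(2π)) · Σ_{k=0}^{R−1} (−1)^k z_k (3/2)^{n−k} Γ(n−k) = O( (3/2)ⁿ Γ(n−R) ) as n → ∞. In other words, the complete asymptotic expansion of z_n is given by the same sequence with alternating signs (the self-replicating, resurgent phenomenon). -/

import Mathlib

/-!
Write `c_k = (a)_k (1 - a)_k / k!` with rising factorials `(a)_k`. Then `z_n = (3/2)^n c_n` for
`a = 1/6`, and `Γ(1/6) Γ(5/6) = 2π`, so it suffices to expand `Γ(a) Γ(1 - a) c_n`, `0 < a < 1`.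
By Euler's beta integral this is `(1 - a)_n ∫₀¹ x^(-a) (1 - x)^(n + a - 1) dx`. Substituting
`v = x / (1 - x)` turns the factor `(1 - x)^a` into `(1 + v)^(-a)`; the binomial series of this
alternates, so for `v ≥ 0` the remainder after `R` terms is bounded by the first omitted term.
Each term `v^k` integrates against `x^(-a) (1 - x)^(n - 1)` to a beta integral again, giving
`(1 - a)_k Γ(n - k) / (1 - a)_n`, whence the expansion `Σ_{k<R} (-1)^k c_k Γ(n - k)` with error
at most `c_R Γ(n - R)`.
-/

/-- `z_n = (6n-1)!!/(6^{2n}(2n)!)`, the `n`-th coefficient of the partition function of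
zero-dimensional φ³-theory, with `(6n-1)!! = (6n)!/(2^{3n}(3n)!)`. -/
noncomputable def zphi3 (n : ℕ) : ℝ :=
  ((6 * n).factorial : ℝ) / (2 ^ (3 * n) * ((3 * n).factorial : ℝ)) /
    (6 ^ (2 * n) * ((2 * n).factorial : ℝ))

open MeasureTheory Set Real Polynomial
open scoped Nat

noncomputable def betaIntegrand (p q x : ℝ) : ℝ := x ^ (p - 1) * (1 - x) ^ (q - 1)

lemma ofReal_betaIntegrand {p q x : ℝ} (hx : x ∈ Icc (0 : ℝ) 1) :
    (betaIntegrand p q x : ℂ) = (x : ℂ) ^ ((p : ℂ) - 1) * (1 - (x : ℂ)) ^ ((q : ℂ) - 1) := by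
  have h1x : 0 ≤ 1 - x := sub_nonneg.2 hx.2
  rw [betaIntegrand, Complex.ofReal_mul, Complex.ofReal_cpow hx.1, Complex.ofReal_cpow h1x]
  push_cast
  rfl

lemma intervalIntegrable_betaIntegrand {p q : ℝ} (hp : 0 < p) (hq : 0 < q) :
    IntervalIntegrable (betaIntegrand p q) volume 0 1 := by
  refine (Complex.betaIntegral_convergent (u := p) (v := q) (by simpa) (by simpa)).norm.congr ?_
  intro x hx
  rw [uIoc_of_le zero_le_one] at hx
  have hx' : x ∈ Icc (0 : ℝ) 1 := Ioc_subset_Icc_self hx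
  simp only [← ofReal_betaIntegrand hx', Complex.norm_real, Real.norm_eq_abs]
  exact abs_of_nonneg (mul_nonneg (rpow_nonneg hx'.1 _) (rpow_nonneg (sub_nonneg.2 hx'.2) _))

lemma integral_betaIntegrand {p q : ℝ} (hp : 0 < p) (hq : 0 < q) :
    ∫ x in (0 : ℝ)..1, betaIntegrand p q x = Gamma p * Gamma q / Gamma (p + q) := by
  have h := Complex.Gamma_mul_Gamma_eq_betaIntegral (s := p) (t := q) (by simpa) (by simpa)
  have hβ : Complex.betaIntegral p q = ((∫ x in (0 : ℝ)..1, betaIntegrand p q x : ℝ) : ℂ) := by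
    rw [Complex.betaIntegral, ← intervalIntegral.integral_ofReal]
    refine intervalIntegral.integral_congr fun x hx => ?_
    rw [uIcc_of_le zero_le_one] at hx
    exact (ofReal_betaIntegrand hx).symm
  rw [hβ, ← Complex.ofReal_add, Complex.Gamma_ofReal, Complex.Gamma_ofReal,
    Complex.Gamma_ofReal] at h
  have h' : Gamma p * Gamma q = Gamma (p + q) * ∫ x in (0 : ℝ)..1, betaIntegrand p q x := by
    exact_mod_cast h
  rw [h', mul_div_cancel_left₀ _ (Gamma_pos_of_pos (add_pos hp hq)).ne']

lemma betaIntegrand_add_nat_sub_nat {x : ℝ} (hx : x ∈ Ioo (0 : ℝ) 1) (p q : ℝ) (m : ℕ) :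
    betaIntegrand (p + m) (q - m) x = betaIntegrand p q x * (x / (1 - x)) ^ m := by
  have h1x : 0 < 1 - x := sub_pos.2 hx.2
  rw [betaIntegrand, betaIntegrand, div_pow, ← rpow_natCast, ← rpow_natCast,
    show p + m - 1 = (p - 1) + m by ring, show q - m - 1 = (q - 1) + -(m : ℝ) by ring,
    rpow_add hx.1, rpow_add h1x, rpow_neg h1x.le]
  ring

lemma betaIntegrand_add {x : ℝ} (hx : x ∈ Ioo (0 : ℝ) 1) (p q a : ℝ) :
    betaIntegrand p (q + a) x = betaIntegrand p q x * (1 + x / (1 - x)) ^ (-a) := by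
  have h1x : 0 < 1 - x := sub_pos.2 hx.2
  have hv : 1 + x / (1 - x) = (1 - x)⁻¹ := by field_simp; ring
  rw [betaIntegrand, betaIntegrand, hv, inv_rpow h1x.le, ← rpow_neg h1x.le, neg_neg,
    show q + a - 1 = (q - 1) + a by ring, rpow_add h1x]
  ring

lemma Real.Gamma_add_nat_eq_ascPochhammer {b : ℝ} (hb : 0 < b) (k : ℕ) :
    Gamma (b + k) = (ascPochhammer ℝ k).eval b * Gamma b := by
  induction k with
  | zero => simp
  | succ k ih =>
    have hbk : b + k ≠ 0 := by positivity
    rw [Nat.cast_succ, ← add_assoc, Gamma_add_one hbk, ih, ascPochhammer_succ_eval]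
    ring

/-- The Taylor polynomial of degree `< R` of `v ↦ (1 + v) ^ (-a)` at `0`. -/
noncomputable def binomialTaylor (a : ℝ) (R : ℕ) (v : ℝ) : ℝ :=
  ∑ k ∈ Finset.range R, (-1) ^ k * (ascPochhammer ℝ k).eval a / k ! * v ^ k

lemma hasDerivAt_binomialTaylor (a : ℝ) (R : ℕ) (v : ℝ) :
    HasDerivAt (binomialTaylor a (R + 1)) (-a * binomialTaylor (a + 1) R v) v := by
  have h := HasDerivAt.fun_sum (u := Finset.range (R + 1)) fun k _ =>
    (hasDerivAt_pow k v).const_mul ((-1) ^ k * (ascPochhammer ℝ k).eval a / k !)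
  refine h.congr_deriv ?_
  rw [Finset.sum_range_succ', binomialTaylor, Finset.mul_sum]
  simp only [Nat.cast_zero, zero_mul, mul_zero, add_zero]
  refine Finset.sum_congr rfl fun k _ => ?_
  rw [ascPochhammer_succ_left]
  simp only [eval_mul, eval_X, eval_comp, eval_add, eval_one, Nat.factorial_succ,
    Nat.add_sub_cancel, pow_succ]
  push_cast
  field_simp

lemma abs_one_add_rpow_neg_sub_binomialTaylor_le (R : ℕ) {a v : ℝ} (ha : 0 ≤ a) (hv : 0 ≤ v) :
    |(1 + v) ^ (-a) - binomialTaylor a R v| ≤ (ascPochhammer ℝ R).eval a / R ! * v ^ R := by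
  induction R generalizing a v with
  | zero =>
    simp only [binomialTaylor, Finset.range_zero, Finset.sum_empty, sub_zero, ascPochhammer_zero,
      eval_one, Nat.factorial_zero, Nat.cast_one, div_one, pow_zero, mul_one]
    rw [abs_of_nonneg (by positivity)]
    exact rpow_le_one_of_one_le_of_nonpos (le_add_of_nonneg_right hv) (neg_nonpos.2 ha)
  | succ R ih =>
    -- the derivative of the remainder is `-a` times the remainder for `a + 1`, so the
    -- induction hypothesis bounds it by the derivative of `C v ^ (R + 1)`
    set C := (ascPochhammer ℝ (R + 1)).eval a / (R + 1)! with hC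
    have hderiv : ∀ t ∈ Ici (0 : ℝ),
        HasDerivAt (fun t => (1 + t) ^ (-a) - binomialTaylor a (R + 1) t)
          (-a * ((1 + t) ^ (-(a + 1)) - binomialTaylor (a + 1) R t)) t := by
      intro t ht
      have h1t : 0 < 1 + t := by linarith [mem_Ici.1 ht]
      refine ((((hasDerivAt_id t).const_add 1).rpow_const (p := -a) (Or.inl h1t.ne')).sub
        (hasDerivAt_binomialTaylor a R t)).congr_deriv ?_
      rw [show -a - 1 = -(a + 1) by ring]
      simp only [id]
      ring
    have hbound : ∀ t ∈ Ico 0 v, ‖-a * ((1 + t) ^ (-(a + 1)) - binomialTaylor (a + 1) R t)‖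
        ≤ C * (R + 1) * t ^ R := by
      intro t ht
      rw [norm_mul, norm_neg, Real.norm_eq_abs, Real.norm_eq_abs, abs_of_nonneg ha, hC,
        ascPochhammer_succ_left]
      calc a * |(1 + t) ^ (-(a + 1)) - binomialTaylor (a + 1) R t|
          ≤ a * ((ascPochhammer ℝ R).eval (a + 1) / R ! * t ^ R) :=
            mul_le_mul_of_nonneg_left (ih (by linarith) ht.1) ha
        _ = _ := by
            simp only [eval_mul, eval_X, eval_comp, eval_add, eval_one, Nat.factorial_succ]
            push_cast
            field_simp
    refine image_norm_le_of_norm_deriv_right_le_deriv_boundary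
      (f := fun t => (1 + t) ^ (-a) - binomialTaylor a (R + 1) t) (B := fun t => C * t ^ (R + 1))
      (fun t ht => (hderiv t ht.1).continuousAt.continuousWithinAt)
      (fun t ht => (hderiv t ht.1).hasDerivWithinAt) ?_ (fun t => ?_) hbound ⟨hv, le_rfl⟩
    · simp [binomialTaylor, Finset.sum_range_succ']
    · refine ((hasDerivAt_pow (R + 1) t).const_mul C).congr_deriv ?_
      push_cast
      ring

noncomputable def pochhammerCoeff (a : ℝ) (k : ℕ) : ℝ :=
  (ascPochhammer ℝ k).eval a * (ascPochhammer ℝ k).eval (1 - a) / k !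

lemma ascPochhammer_mul_integral_betaIntegrand {b : ℝ} (hb : 0 < b) {k n : ℕ} (hkn : k < n) :
    (ascPochhammer ℝ n).eval b * ∫ x in (0 : ℝ)..1, betaIntegrand (b + k) (n - k) x
      = (ascPochhammer ℝ k).eval b * Gamma (n - k) := by
  have hkn' : (k : ℝ) < n := by exact_mod_cast hkn
  rw [integral_betaIntegrand (by positivity) (by linarith), add_add_sub_cancel,
    Real.Gamma_add_nat_eq_ascPochhammer hb, Real.Gamma_add_nat_eq_ascPochhammer hb]
  have := (ascPochhammer_pos n b hb).ne'
  have := (Gamma_pos_of_pos hb).ne'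
  field_simp

lemma ascPochhammer_mul_integral_betaIntegrand_one_sub {a : ℝ} (ha0 : 0 < a) (ha1 : a < 1)
    (n : ℕ) :
    (ascPochhammer ℝ n).eval (1 - a) * ∫ x in (0 : ℝ)..1, betaIntegrand (1 - a) (n + a) x
      = Gamma a * Gamma (1 - a) * pochhammerCoeff a n := by
  rw [integral_betaIntegrand (by linarith) (by positivity), show 1 - a + (n + a) = n + 1 by ring,
    Gamma_nat_eq_factorial, add_comm (n : ℝ) a, Real.Gamma_add_nat_eq_ascPochhammer ha0,
    pochhammerCoeff]
  ring

noncomputable def remainderIntegrand (a : ℝ) (n R : ℕ) (x : ℝ) : ℝ :=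
  betaIntegrand (1 - a) (n + a) x - ∑ k ∈ Finset.range R,
    (-1) ^ k * (ascPochhammer ℝ k).eval a / (k ! : ℝ) * betaIntegrand (1 - a + k) (n - k) x

lemma ascPochhammer_mul_integral_remainderIntegrand {a : ℝ} (ha0 : 0 < a) (ha1 : a < 1)
    {R n : ℕ} (hRn : R < n) :
    (ascPochhammer ℝ n).eval (1 - a) * ∫ x in (0 : ℝ)..1, remainderIntegrand a n R x
      = Gamma a * Gamma (1 - a) * pochhammerCoeff a n
        - ∑ k ∈ Finset.range R, (-1) ^ k * pochhammerCoeff a k * Gamma (n - k) := by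
  have hterm : ∀ k ∈ Finset.range R, IntervalIntegrable (fun x => (-1) ^ k
      * (ascPochhammer ℝ k).eval a / (k ! : ℝ) * betaIntegrand (1 - a + k) (n - k) x) volume 0 1 :=
    fun k hk => (intervalIntegrable_betaIntegrand (by linarith [k.cast_nonneg (α := ℝ)])
      (sub_pos.2 (by exact_mod_cast (Finset.mem_range.1 hk).trans hRn))).const_mul _
  have hsum := IntervalIntegrable.sum _ hterm
  simp only [Finset.sum_fn] at hsum
  unfold remainderIntegrand
  rw [intervalIntegral.integral_sub
    (intervalIntegrable_betaIntegrand (by linarith) (by positivity)) hsum,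
    intervalIntegral.integral_finsetSum hterm, mul_sub,
    ascPochhammer_mul_integral_betaIntegrand_one_sub ha0 ha1, Finset.mul_sum]
  congr 1
  refine Finset.sum_congr rfl fun k hk => ?_
  rw [intervalIntegral.integral_const_mul, mul_left_comm,
    ascPochhammer_mul_integral_betaIntegrand (by linarith) ((Finset.mem_range.1 hk).trans hRn),
    pochhammerCoeff]
  ring

lemma remainderIntegrand_eq {x : ℝ} (hx : x ∈ Ioo (0 : ℝ) 1) (a : ℝ) (n R : ℕ) :
    remainderIntegrand a n R x = betaIntegrand (1 - a) n x
      * ((1 + x / (1 - x)) ^ (-a) - binomialTaylor a R (x / (1 - x))) := by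
  simp only [remainderIntegrand, betaIntegrand_add hx, betaIntegrand_add_nat_sub_nat hx,
    binomialTaylor, mul_sub, Finset.mul_sum]
  congr 1
  exact Finset.sum_congr rfl fun k _ => by ring

lemma abs_remainderIntegrand_le {x : ℝ} (hx : x ∈ Ioo (0 : ℝ) 1) {a : ℝ} (ha : 0 ≤ a) (n R : ℕ) :
    |remainderIntegrand a n R x|
      ≤ (ascPochhammer ℝ R).eval a / R ! * betaIntegrand (1 - a + R) (n - R) x := by
  have hβ : 0 ≤ betaIntegrand (1 - a) n x :=
    mul_nonneg (rpow_nonneg hx.1.le _) (rpow_nonneg (sub_pos.2 hx.2).le _)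
  rw [remainderIntegrand_eq hx, abs_mul, abs_of_nonneg hβ, betaIntegrand_add_nat_sub_nat hx]
  calc _ ≤ betaIntegrand (1 - a) n x * ((ascPochhammer ℝ R).eval a / R ! * (x / (1 - x)) ^ R) :=
        mul_le_mul_of_nonneg_left (abs_one_add_rpow_neg_sub_binomialTaylor_le R ha
          (div_nonneg hx.1.le (sub_pos.2 hx.2).le)) hβ
    _ = _ := by ring

theorem abs_Gamma_mul_Gamma_mul_pochhammerCoeff_sub_sum_le {a : ℝ} (ha0 : 0 < a) (ha1 : a < 1)
    {R n : ℕ} (hRn : R < n) :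
    |Gamma a * Gamma (1 - a) * pochhammerCoeff a n
        - ∑ k ∈ Finset.range R, (-1) ^ k * pochhammerCoeff a k * Gamma (n - k)|
      ≤ pochhammerCoeff a R * Gamma (n - R) := by
  have hpoch : 0 < (ascPochhammer ℝ n).eval (1 - a) := ascPochhammer_pos n _ (by linarith)
  have hbound : |∫ x in (0 : ℝ)..1, remainderIntegrand a n R x|
      ≤ ∫ x in (0 : ℝ)..1,
          (ascPochhammer ℝ R).eval a / R ! * betaIntegrand (1 - a + R) (n - R) x := by
    rw [← Real.norm_eq_abs]
    refine intervalIntegral.norm_integral_le_of_norm_le zero_le_one ?_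
      ((intervalIntegrable_betaIntegrand (by positivity)
        (sub_pos.2 (Nat.cast_lt.2 hRn))).const_mul _)
    filter_upwards [Measure.ae_ne volume 1] with x hx1 hx
    exact abs_remainderIntegrand_le ⟨hx.1, lt_of_le_of_ne hx.2 hx1⟩ ha0.le n R
  rw [← ascPochhammer_mul_integral_remainderIntegrand ha0 ha1 hRn, abs_mul, abs_of_pos hpoch]
  calc _ ≤ (ascPochhammer ℝ n).eval (1 - a) * ∫ x in (0 : ℝ)..1,
          (ascPochhammer ℝ R).eval a / R ! * betaIntegrand (1 - a + R) (n - R) x :=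
        mul_le_mul_of_nonneg_left hbound hpoch.le
    _ = _ := by
      rw [intervalIntegral.integral_const_mul, mul_left_comm,
        ascPochhammer_mul_integral_betaIntegrand (by linarith) hRn, pochhammerCoeff]
      ring

lemma pochhammerCoeff_succ (a : ℝ) (n : ℕ) :
    pochhammerCoeff a (n + 1) = pochhammerCoeff a n * ((n + a) * (n + 1 - a) / (n + 1)) := by
  simp only [pochhammerCoeff, ascPochhammer_succ_eval, Nat.factorial_succ, Nat.cast_mul,
    Nat.cast_succ]
  field_simp
  ring

lemma zphi3_succ (n : ℕ) :
    zphi3 (n + 1) = zphi3 n * (3 / 2 * (n + 1 / 6) * (n + 5 / 6) / (n + 1)) := by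
  simp only [zphi3, mul_add, mul_one, Nat.factorial_succ, pow_add, Nat.cast_mul, Nat.cast_add,
    Nat.cast_ofNat, Nat.cast_one]
  field_simp
  ring

lemma zphi3_eq_pochhammerCoeff (n : ℕ) : zphi3 n = (3 / 2) ^ n * pochhammerCoeff (1 / 6) n := by
  induction n with
  | zero => simp [zphi3, pochhammerCoeff]
  | succ n ih =>
    rw [zphi3_succ, ih, pochhammerCoeff_succ]
    ring

lemma Gamma_one_div_six_mul_Gamma_one_sub : Gamma (1 / 6) * Gamma (1 - 1 / 6) = 2 * π := by
  rw [Gamma_mul_Gamma_one_sub, mul_one_div, sin_pi_div_six]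
  ring

/-- The complete asymptotic expansion of `z_n` is given by the same sequence with
alternating signs: for every `R`,
`z_n - (1/(2π)) Σ_{k<R} (-1)^k z_k (3/2)^{n-k} Γ(n-k) = O((3/2)^n Γ(n-R))` as `n → ∞`. -/
theorem stmt6 (R : ℕ) :
    (fun n : ℕ => zphi3 n - 1 / (2 * Real.pi) *
        ∑ k ∈ Finset.range R,
          (-1 : ℝ) ^ k * zphi3 k * (3 / 2 : ℝ) ^ ((n : ℤ) - (k : ℤ)) *
            Real.Gamma ((n : ℝ) - (k : ℝ)))
      =O[Filter.atTop] fun n : ℕ => (3 / 2 : ℝ) ^ n * Real.Gamma ((n : ℝ) - (R : ℝ)) := by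
  refine Asymptotics.IsBigO.of_bound (pochhammerCoeff (1 / 6) R / (2 * π)) ?_
  filter_upwards [Filter.eventually_gt_atTop R] with n hRn
  have hterm : ∀ k ∈ Finset.range R,
      (-1 : ℝ) ^ k * zphi3 k * (3 / 2 : ℝ) ^ ((n : ℤ) - (k : ℤ)) * Gamma (n - k)
        = (3 / 2) ^ n * ((-1) ^ k * pochhammerCoeff (1 / 6) k * Gamma (n - k)) := by
    intro k _
    rw [zphi3_eq_pochhammerCoeff, zpow_sub₀ (by norm_num), zpow_natCast, zpow_natCast]
    field_simp
  have hexp : zphi3 n - 1 / (2 * π) * ∑ k ∈ Finset.range R,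
        (-1 : ℝ) ^ k * zphi3 k * (3 / 2 : ℝ) ^ ((n : ℤ) - (k : ℤ)) * Gamma (n - k)
      = (3 / 2) ^ n / (2 * π) * (Gamma (1 / 6) * Gamma (1 - 1 / 6) * pochhammerCoeff (1 / 6) n
        - ∑ k ∈ Finset.range R, (-1) ^ k * pochhammerCoeff (1 / 6) k * Gamma (n - k)) := by
    rw [Finset.sum_congr rfl hterm, ← Finset.mul_sum, Gamma_one_div_six_mul_Gamma_one_sub,
      zphi3_eq_pochhammerCoeff]
    field_simp
  have hGamma : 0 ≤ Gamma (n - R) := (Gamma_pos_of_pos (sub_pos.2 (by exact_mod_cast hRn))).le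
  rw [hexp, norm_mul, Real.norm_of_nonneg (by positivity), Real.norm_eq_abs,
    Real.norm_of_nonneg (mul_nonneg (by positivity) hGamma)]
  calc _ ≤ (3 / 2) ^ n / (2 * π) * (pochhammerCoeff (1 / 6) R * Gamma (n - R)) :=
        mul_le_mul_of_nonneg_left (abs_Gamma_mul_Gamma_mul_pochhammerCoeff_sub_sum_le
          (by norm_num) (by norm_num) hRn) (by positivity)
    _ = _ := by ring
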